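/- Connectivity of signed measures by optimal transport kernels is not transitive in dimension two: for the cost c(x,y) = ‖x − y‖² on ℝ², consider the signed measures a₁ = δ_{(1,0.5)} − δ_{(−1,−0.5)}, a₂ = δ_{(−1,0.5)} − δ_{(1,−0.5)}, and a₃ = δ_{(0,1)} − δ_{(0,−1)}. Then there exist optimal transport kernels K₁ and K₂ with a₁K₁ = a₃ and a₃K₂ = a₂, but there is no optimal transport kernel K with a₁K = a₂. -/

import Mathlib

/-! A deterministic kernel `x ↦ δ_{T x}` is optimal as soon as `T` has Kantorovich potentials:
functions `G`, `H` with `G x + H y ≤ c (x, y)` and equality on the graph of `T` (plus an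
integrability bound); integrating against any competing coupling then shows that no coupling
beats the graph of `T`. For the quadratic cost every map `x ↦ A x` with `A` symmetric positive
definite has such potentials, and two of them carry `a₁` to `a₃` and `a₃` to `a₂`.

Conversely, a Markov kernel sending `δ_p - δ_q` to `δ_r - δ_s` must send `p` to `δ_r` and `q`
to `δ_s`. Optimality on `δ_p + δ_q` then forces `c(p,r) + c(q,s) ≤ c(p,s) + c(q,r)`, which for
`a₁`, `a₂` reads `4 + 4 ≤ 1 + 1`.
-/

open MeasureTheory ProbabilityTheory Set
open scoped ENNReal

noncomputable section

/-- The transport cost of a plan `γ` for the cost function `c`. -/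
def transportCost {X Y : Type*} [MeasurableSpace X] [MeasurableSpace Y]
    (c : X × Y → ℝ) (γ : Measure (X × Y)) : ℝ≥0∞ :=
  ∫⁻ pt, ENNReal.ofReal (c pt) ∂γ

/-- `γ` is a coupling of `μ` and `ν`: its marginals are `μ` and `ν`. -/
def IsCoupling {X Y : Type*} [MeasurableSpace X] [MeasurableSpace Y]
    (γ : Measure (X × Y)) (μ : Measure X) (ν : Measure Y) : Prop :=
  γ.map Prod.fst = μ ∧ γ.map Prod.snd = ν

/-- `γ` is an optimal coupling of `μ` and `ν` for the cost `c`. -/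
def IsOptimalCoupling {X Y : Type*} [MeasurableSpace X] [MeasurableSpace Y]
    (c : X × Y → ℝ) (γ : Measure (X × Y)) (μ : Measure X) (ν : Measure Y) : Prop :=
  IsCoupling γ μ ν ∧
    ∀ γ' : Measure (X × Y), IsCoupling γ' μ ν → transportCost c γ ≤ transportCost c γ'

/-- A Markov kernel `K` is an optimal transport kernel for the cost `c` if, for every
finite positive measure `μ`, whenever the product measure `μ ⊙ K = μ ⊗ₘ K` has finite
transport cost it is an optimal coupling between `μ` and `μK`. -/
def IsOptimalTransportKernel {X Y : Type*} [MeasurableSpace X] [MeasurableSpace Y]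
    (c : X × Y → ℝ) (K : Kernel X Y) : Prop :=
  ∀ μ : Measure X, IsFiniteMeasure μ → transportCost c (μ ⊗ₘ K) < ⊤ →
    IsOptimalCoupling c (μ ⊗ₘ K) μ (μ.bind K)

/-- The image of a finite measure under a Markov kernel is finite. -/
instance bindIsFiniteMeasure {X Y : Type*} [MeasurableSpace X] [MeasurableSpace Y]
    (μ : Measure X) [IsFiniteMeasure μ] (K : Kernel X Y) [IsMarkovKernel K] :
    IsFiniteMeasure (μ.bind K) := by
  constructor
  rw [Measure.bind_apply MeasurableSet.univ (Kernel.measurable K).aemeasurable]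
  calc ∫⁻ x, (K x) Set.univ ∂μ = ∫⁻ _, 1 ∂μ := by simp
    _ = μ Set.univ := by simp
    _ < ⊤ := measure_lt_top μ _

/-- The image `aK := a⁺K − a⁻K` of a finite signed measure `a = a⁺ − a⁻` (Jordan
decomposition) under a Markov kernel `K`. -/
def signedKernelImage {X Y : Type*} [MeasurableSpace X] [MeasurableSpace Y]
    (a : SignedMeasure X) (K : Kernel X Y) [IsMarkovKernel K] : SignedMeasure Y :=
  (a.toJordanDecomposition.posPart.bind K).toSignedMeasure
    - (a.toJordanDecomposition.negPart.bind K).toSignedMeasure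

namespace MeasureTheory

variable {α : Type*} [MeasurableSpace α]

lemma ofReal_integral_le_lintegral_ofReal (μ : Measure α) (f : α → ℝ) :
    ENNReal.ofReal (∫ x, f x ∂μ) ≤ ∫⁻ x, ENNReal.ofReal (f x) ∂μ := by
  by_cases hf : Integrable f μ
  · calc ENNReal.ofReal (∫ x, f x ∂μ) ≤ ENNReal.ofReal (∫ x, max (f x) 0 ∂μ) :=
          ENNReal.ofReal_le_ofReal (integral_mono hf hf.pos_part fun x => le_max_left _ _)
      _ = ∫⁻ x, ENNReal.ofReal (max (f x) 0) ∂μ :=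
          ofReal_integral_eq_lintegral_ofReal hf.pos_part
            (ae_of_all _ fun x => le_max_right _ _)
      _ = ∫⁻ x, ENNReal.ofReal (f x) ∂μ := by simp
  · simp [integral_undef hf]

namespace Measure

lemma dirac_mutuallySingular_dirac [MeasurableSingletonClass α] {p q : α} (hpq : p ≠ q) :
    dirac p ⟂ₘ dirac q :=
  ⟨{q}, measurableSet_singleton q, by simp [hpq], by simp⟩

lemma eq_dirac_of_measure_singleton_eq_one [MeasurableSingletonClass α] {μ : Measure α}
    [IsProbabilityMeasure μ] {r : α} (hr : μ {r} = 1) : μ = dirac r := by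
  have hμ : ∀ᵐ x ∂μ, x ∈ ({r} : Finset α) := by
    rw [ae_iff]
    simpa [Set.compl_def] using (prob_compl_eq_zero_iff (measurableSet_singleton r)).mpr hr
  simpa [hr] using ae_mem_finset_iff.mp hμ

lemma eq_dirac_of_toSignedMeasure_sub_eq [MeasurableSingletonClass α] {μ ν : Measure α}
    [IsProbabilityMeasure μ] [IsProbabilityMeasure ν] {r s : α} (hrs : r ≠ s)
    (h : μ.toSignedMeasure - ν.toSignedMeasure
      = (dirac r).toSignedMeasure - (dirac s).toSignedMeasure) :
    μ = dirac r := by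
  have hr : (μ {r}).toReal - (ν {r}).toReal = 1 := by
    simpa [measureReal_def, hrs.symm] using congrArg (fun a : SignedMeasure α => a {r}) h
  have hμr : 1 ≤ (μ {r}).toReal := by linarith [(ν {r}).toReal_nonneg]
  refine eq_dirac_of_measure_singleton_eq_one (le_antisymm prob_le_one ?_)
  simpa using ENNReal.ofReal_le_of_le_toReal hμr

lemma dirac_compProd_of_apply_eq_dirac [MeasurableSingletonClass α] {β : Type*}
    [MeasurableSpace β] {K : Kernel α β}
    [IsSFiniteKernel K] {x : α} {y : β} (hK : K x = dirac y) :
    dirac x ⊗ₘ K = dirac (x, y) := by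
  ext t ht
  rw [dirac_compProd_apply ht, hK, dirac_apply' _ (measurable_prodMk_left ht),
    dirac_apply' _ ht]
  rfl

end Measure

end MeasureTheory

section SignedKernelImage

variable {X Y : Type*} [MeasurableSpace X] [MeasurableSpace Y] [MeasurableSingletonClass X]

lemma toJordanDecomposition_dirac_sub_dirac {p q : X} (hpq : p ≠ q) :
    ((Measure.dirac p).toSignedMeasure - (Measure.dirac q).toSignedMeasure).toJordanDecomposition
      = ⟨Measure.dirac p, Measure.dirac q, Measure.dirac_mutuallySingular_dirac hpq⟩ := by
  set j : JordanDecomposition X :=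
    ⟨Measure.dirac p, Measure.dirac q, Measure.dirac_mutuallySingular_dirac hpq⟩
  have hj : j.toSignedMeasure
      = (Measure.dirac p).toSignedMeasure - (Measure.dirac q).toSignedMeasure := rfl
  rw [← hj, JordanDecomposition.toJordanDecomposition_toSignedMeasure]

lemma signedKernelImage_dirac_sub_dirac {p q : X} (hpq : p ≠ q) (K : Kernel X Y)
    [IsMarkovKernel K] :
    signedKernelImage ((Measure.dirac p).toSignedMeasure - (Measure.dirac q).toSignedMeasure) K
      = (K p).toSignedMeasure - (K q).toSignedMeasure := by
  simp only [signedKernelImage, toJordanDecomposition_dirac_sub_dirac hpq,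
    Measure.dirac_bind K.measurable]

lemma signedKernelImage_dirac_sub_dirac_deterministic {p q : X} (hpq : p ≠ q) {T : X → Y}
    (hT : Measurable T) :
    signedKernelImage ((Measure.dirac p).toSignedMeasure - (Measure.dirac q).toSignedMeasure)
        (Kernel.deterministic T hT)
      = (Measure.dirac (T p)).toSignedMeasure - (Measure.dirac (T q)).toSignedMeasure := by
  simp only [signedKernelImage_dirac_sub_dirac hpq, Kernel.deterministic_apply]

lemma apply_eq_dirac_of_signedKernelImage_dirac_sub_dirac [MeasurableSingletonClass Y]
    {p q : X} (hpq : p ≠ q) {r s : Y} (hrs : r ≠ s) {K : Kernel X Y} [IsMarkovKernel K]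
    (hK : signedKernelImage
        ((Measure.dirac p).toSignedMeasure - (Measure.dirac q).toSignedMeasure) K
      = (Measure.dirac r).toSignedMeasure - (Measure.dirac s).toSignedMeasure) :
    K p = Measure.dirac r ∧ K q = Measure.dirac s := by
  rw [signedKernelImage_dirac_sub_dirac hpq] at hK
  refine ⟨Measure.eq_dirac_of_toSignedMeasure_sub_eq hrs hK,
    Measure.eq_dirac_of_toSignedMeasure_sub_eq (ν := K p) hrs.symm ?_⟩
  rw [← neg_sub, hK, neg_sub]

end SignedKernelImage

section OptimalKernel

variable {X Y : Type*} [MeasurableSpace X] [MeasurableSpace Y] {c : X × Y → ℝ}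

lemma isCoupling_compProd (μ : Measure X) [SFinite μ] (K : Kernel X Y) [IsMarkovKernel K] :
    IsCoupling (μ ⊗ₘ K) μ (μ.bind K) :=
  ⟨Measure.fst_compProd μ K, Measure.snd_compProd μ K⟩

lemma transportCost_compProd_deterministic (hc : Measurable c) (μ : Measure X) [SFinite μ]
    {T : X → Y} (hT : Measurable T) :
    transportCost c (μ ⊗ₘ Kernel.deterministic T hT) = ∫⁻ x, ENNReal.ofReal (c (x, T x)) ∂μ := by
  rw [transportCost, Measure.compProd_deterministic]
  exact lintegral_map hc.ennreal_ofReal (measurable_id.prodMk hT)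

lemma transportCost_dirac_add_dirac [MeasurableSingletonClass (X × Y)] (z w : X × Y) :
    transportCost c (Measure.dirac z + Measure.dirac w)
      = ENNReal.ofReal (c z) + ENNReal.ofReal (c w) := by
  rw [transportCost, lintegral_add_measure, lintegral_dirac, lintegral_dirac]

lemma ofReal_integral_add_le_transportCost {γ : Measure (X × Y)} {μ : Measure X}
    {ν : Measure Y} (hγ : IsCoupling γ μ ν) {G : X → ℝ} {H : Y → ℝ} (hG : Integrable G μ)
    (hH : Integrable H ν) (hle : ∀ x y, G x + H y ≤ c (x, y)) :
    ENNReal.ofReal (∫ x, G x ∂μ + ∫ y, H y ∂ν) ≤ transportCost c γ := by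
  obtain ⟨rfl, rfl⟩ := hγ
  calc ENNReal.ofReal (∫ x, G x ∂γ.map Prod.fst + ∫ y, H y ∂γ.map Prod.snd)
      = ENNReal.ofReal (∫ z, (G z.1 + H z.2) ∂γ) := by
        rw [integral_map measurable_fst.aemeasurable hG.aestronglyMeasurable,
          integral_map measurable_snd.aemeasurable hH.aestronglyMeasurable]
        exact congrArg ENNReal.ofReal (integral_add (hG.comp_measurable measurable_fst)
          (hH.comp_measurable measurable_snd)).symm
    _ ≤ ∫⁻ z, ENNReal.ofReal (G z.1 + H z.2) ∂γ := ofReal_integral_le_lintegral_ofReal _ _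
    _ ≤ transportCost c γ := lintegral_mono fun z => ENNReal.ofReal_le_ofReal (hle z.1 z.2)

theorem isOptimalTransportKernel_deterministic_of_potentials (hc : Measurable c)
    (hc_nonneg : ∀ z, 0 ≤ c z) {T : X → Y} (hT : Measurable T) {G : X → ℝ} {H : Y → ℝ}
    (hG : Measurable G) (hH : Measurable H) (hGH_le : ∀ x y, G x + H y ≤ c (x, y))
    (hGH_eq : ∀ x, G x + H (T x) = c (x, T x)) {M : ℝ} (hGM : ∀ x, |G x| ≤ M * c (x, T x)) :
    IsOptimalTransportKernel c (Kernel.deterministic T hT) := by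
  intro μ _ hfin
  refine ⟨isCoupling_compProd μ (Kernel.deterministic T hT), fun γ hγ => ?_⟩
  rw [Measure.deterministic_comp_eq_map hT] at hγ
  rw [transportCost_compProd_deterministic hc] at hfin ⊢
  have hcT : Integrable (fun x => c (x, T x)) μ :=
    ⟨(hc.comp (measurable_id.prodMk hT)).aestronglyMeasurable,
      (hasFiniteIntegral_iff_ofReal (ae_of_all _ fun x => hc_nonneg _)).mpr hfin⟩
  have hGi : Integrable G μ :=
    (hcT.const_mul M).mono' hG.aestronglyMeasurable (ae_of_all _ hGM)
  have hHT : Integrable (fun x => H (T x)) μ :=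
    (hcT.sub hGi).congr (ae_of_all _ fun x => by simp [← hGH_eq x])
  have hHi : Integrable H (μ.map T) :=
    (integrable_map_measure hH.aestronglyMeasurable hT.aemeasurable).mpr hHT
  calc ∫⁻ x, ENNReal.ofReal (c (x, T x)) ∂μ
      = ENNReal.ofReal (∫ x, G x ∂μ + ∫ y, H y ∂μ.map T) := by
        rw [← ofReal_integral_eq_lintegral_ofReal hcT (ae_of_all _ fun x => hc_nonneg _),
          integral_map hT.aemeasurable hH.aestronglyMeasurable, ← integral_add hGi hHT]
        simp only [hGH_eq]
    _ ≤ transportCost c γ := ofReal_integral_add_le_transportCost hγ hGi hHi hGH_le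

theorem IsOptimalTransportKernel.ofReal_add_le [MeasurableSingletonClass X]
    [MeasurableSingletonClass Y] {K : Kernel X Y} [IsMarkovKernel K]
    (hK : IsOptimalTransportKernel c K) {p q : X} {r s : Y} (hp : K p = Measure.dirac r)
    (hq : K q = Measure.dirac s) :
    ENNReal.ofReal (c (p, r)) + ENNReal.ofReal (c (q, s))
      ≤ ENNReal.ofReal (c (p, s)) + ENNReal.ofReal (c (q, r)) := by
  set μ := Measure.dirac p + Measure.dirac q
  have hμK : μ ⊗ₘ K = Measure.dirac (p, r) + Measure.dirac (q, s) := by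
    rw [Measure.compProd_add_left, Measure.dirac_compProd_of_apply_eq_dirac hp,
      Measure.dirac_compProd_of_apply_eq_dirac hq]
  have hcoup : IsCoupling (Measure.dirac (p, s) + Measure.dirac (q, r)) μ (μ.bind K) := by
    rw [← Measure.snd_compProd, hμK]
    refine ⟨?_, ?_⟩ <;> simp [μ, Measure.snd, Measure.map_add, measurable_fst, measurable_snd,
      Measure.map_dirac', add_comm]
  have hfin : transportCost c (μ ⊗ₘ K) < ⊤ := by
    simp [hμK, transportCost_dirac_add_dirac]
  simpa [hμK, transportCost_dirac_add_dirac] using (hK μ inferInstance hfin).2 _ hcoup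

end OptimalKernel

/- The squared Euclidean distance; `dist` on `ℝ × ℝ` is the sup metric. -/
def sqDist (z : (ℝ × ℝ) × (ℝ × ℝ)) : ℝ := (z.1.1 - z.2.1) ^ 2 + (z.1.2 - z.2.2) ^ 2

lemma measurable_sqDist : Measurable sqDist := by
  unfold sqDist
  fun_prop

lemma sqDist_nonneg (z : (ℝ × ℝ) × (ℝ × ℝ)) : 0 ≤ sqDist z := by
  unfold sqDist
  positivity

/- Both maps are `x ↦ A x` with `A` symmetric positive definite (`A = [[1,-2],[-2,6]]`, resp.
`[[3,-1],[-1,1/2]]`), and the potentials are `G x = |x|² - ⟨A x, x⟩`, `H y = |y|² - ⟨A⁻¹ y, y⟩`,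
so that `sqDist (x, y) - G x - H y = ⟨A (x - A⁻¹ y), x - A⁻¹ y⟩ ≥ 0`. -/
lemma isOptimalTransportKernel_sqDist_deterministic₁ :
    IsOptimalTransportKernel sqDist (Kernel.deterministic
      (fun x : ℝ × ℝ => (x.1 - 2 * x.2, -2 * x.1 + 6 * x.2)) (by fun_prop)) := by
  refine isOptimalTransportKernel_deterministic_of_potentials measurable_sqDist sqDist_nonneg _
    (G := fun x => 4 * x.1 * x.2 - 5 * x.2 ^ 2)
    (H := fun y => -2 * y.1 ^ 2 - 2 * y.1 * y.2 + y.2 ^ 2 / 2)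
    (by fun_prop) (by fun_prop) (fun x y => ?_) (fun x => ?_) (M := 2) (fun x => ?_)
  · simp only [sqDist]
    nlinarith [sq_nonneg (x.1 - 2 * x.2 - y.1), sq_nonneg (x.2 - y.1 - y.2 / 2)]
  · simp only [sqDist]
    ring
  · simp only [sqDist, abs_le]
    constructor <;>
      nlinarith [sq_nonneg (x.2 - (2 * x.1 - 5 * x.2)), sq_nonneg (x.2 + (2 * x.1 - 5 * x.2))]

lemma isOptimalTransportKernel_sqDist_deterministic₂ :
    IsOptimalTransportKernel sqDist (Kernel.deterministic
      (fun x : ℝ × ℝ => (3 * x.1 - x.2, -x.1 + x.2 / 2)) (by fun_prop)) := by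
  refine isOptimalTransportKernel_deterministic_of_potentials measurable_sqDist sqDist_nonneg _
    (G := fun x => -2 * x.1 ^ 2 + 2 * x.1 * x.2 + x.2 ^ 2 / 2)
    (H := fun y => -4 * y.1 * y.2 - 5 * y.2 ^ 2)
    (by fun_prop) (by fun_prop) (fun x y => ?_) (fun x => ?_) (M := 2) (fun x => ?_)
  · simp only [sqDist]
    nlinarith [sq_nonneg (x.1 - y.1 - 2 * y.2), sq_nonneg (-2 * x.1 + x.2 - 2 * y.2)]
  · simp only [sqDist]
    ring
  · simp only [sqDist, abs_le]
    constructor <;>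
      nlinarith [sq_nonneg (x.2 - 2 * x.1 - (x.1 + x.2 / 2)),
        sq_nonneg (x.2 - 2 * x.1 + (x.1 + x.2 / 2))]

/-- Connectivity of signed measures by optimal transport kernels is
not transitive in dimension two: for the squared Euclidean cost on `ℝ²` and
`a₁ = δ_{(1,0.5)} − δ_{(−1,−0.5)}`, `a₂ = δ_{(−1,0.5)} − δ_{(1,−0.5)}`,
`a₃ = δ_{(0,1)} − δ_{(0,−1)}`, there are optimal transport kernels sending `a₁` to `a₃`
and `a₃` to `a₂`, but none sending `a₁` to `a₂`. -/
theorem stmt14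
    (c : (ℝ × ℝ) × (ℝ × ℝ) → ℝ)
    (hc : ∀ pt : (ℝ × ℝ) × (ℝ × ℝ),
      c pt = (pt.1.1 - pt.2.1) ^ 2 + (pt.1.2 - pt.2.2) ^ 2)
    (a₁ a₂ a₃ : SignedMeasure (ℝ × ℝ))
    (ha₁ : a₁ = (Measure.dirac ((1 : ℝ), (1 / 2 : ℝ))).toSignedMeasure
        - (Measure.dirac ((-1 : ℝ), (-(1 / 2) : ℝ))).toSignedMeasure)
    (ha₂ : a₂ = (Measure.dirac ((-1 : ℝ), (1 / 2 : ℝ))).toSignedMeasure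
        - (Measure.dirac ((1 : ℝ), (-(1 / 2) : ℝ))).toSignedMeasure)
    (ha₃ : a₃ = (Measure.dirac ((0 : ℝ), (1 : ℝ))).toSignedMeasure
        - (Measure.dirac ((0 : ℝ), (-1 : ℝ))).toSignedMeasure) :
    (∃ K : Kernel (ℝ × ℝ) (ℝ × ℝ), ∃ _ : IsMarkovKernel K,
        IsOptimalTransportKernel c K ∧ signedKernelImage a₁ K = a₃) ∧
    (∃ K : Kernel (ℝ × ℝ) (ℝ × ℝ), ∃ _ : IsMarkovKernel K,
        IsOptimalTransportKernel c K ∧ signedKernelImage a₃ K = a₂) ∧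
    ¬ (∃ K : Kernel (ℝ × ℝ) (ℝ × ℝ), ∃ _ : IsMarkovKernel K,
        IsOptimalTransportKernel c K ∧ signedKernelImage a₁ K = a₂) := by
  obtain rfl : c = sqDist := funext hc
  subst ha₁ ha₂ ha₃
  have h₁ : ((1 : ℝ), (1 / 2 : ℝ)) ≠ ((-1 : ℝ), (-(1 / 2) : ℝ)) := by norm_num [Prod.ext_iff]
  have h₂ : ((-1 : ℝ), (1 / 2 : ℝ)) ≠ ((1 : ℝ), (-(1 / 2) : ℝ)) := by norm_num [Prod.ext_iff]
  have h₃ : ((0 : ℝ), (1 : ℝ)) ≠ ((0 : ℝ), (-1 : ℝ)) := by norm_num [Prod.ext_iff]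
  refine ⟨⟨_, inferInstance, isOptimalTransportKernel_sqDist_deterministic₁, ?_⟩,
    ⟨_, inferInstance, isOptimalTransportKernel_sqDist_deterministic₂, ?_⟩, ?_⟩
  · rw [signedKernelImage_dirac_sub_dirac_deterministic h₁]
    norm_num
  · rw [signedKernelImage_dirac_sub_dirac_deterministic h₃]
    norm_num
  · rintro ⟨K, _, hK, himage⟩
    obtain ⟨hp, hq⟩ := apply_eq_dirac_of_signedKernelImage_dirac_sub_dirac h₁ h₂ himage
    have := hK.ofReal_add_le hp hq
    norm_num [sqDist] at this
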